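/- Let L be an even lattice, let a and c be coprime integers with c ≥ 1, and let β ∈ L*. The quantity e(−a·(r+β, r+β)/(2c)) depends only on the class of r modulo c·L (because L is even and β ∈ L*). Suppose there exists γ ∈ L* with c·γ ∈ L and (γ,β) − c·(γ,γ)/2 ∉ ℤ (that is, β does not lie in the coset A^{c*} of the discriminant form). Then the lattice Gauss sum vanishes: Σ_{r} e(−a·(r+β, r+β)/(2c)) = 0, the sum running over any complete set of representatives of L/cL. -/

import Mathlib

/-- The rational bilinear form on `ℚⁿ` associated to an integral Gram matrix `G`. -/
noncomputable def latBF {n : ℕ} (G : Matrix (Fin n) (Fin n) ℤ) (x y : Fin n → ℚ) : ℚ :=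
  dotProduct x ((G.map (Int.cast : ℤ → ℚ)).mulVec y)

/-- The lattice `L = ℤⁿ` sitting inside `L ⊗ ℚ = ℚⁿ`. -/
def latL (n : ℕ) : Set (Fin n → ℚ) :=
  Set.range (fun m : Fin n → ℤ => fun i => (m i : ℚ))

/-- The dual lattice `L* = {x ∈ L ⊗ ℚ : (x, y) ∈ ℤ for all y ∈ L}`. -/
def latDual {n : ℕ} (G : Matrix (Fin n) (Fin n) ℤ) : Set (Fin n → ℚ) :=
  {x | ∀ m : Fin n → ℤ, ∃ k : ℤ, latBF G x (fun i => (m i : ℚ)) = k}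

/-- `e(t) = exp(2πit)` for rational `t`. -/
noncomputable def eQ (t : ℚ) : ℂ := Complex.exp (2 * (Real.pi : ℂ) * Complex.I * (t : ℂ))

variable {n : ℕ} (G : Matrix (Fin n) (Fin n) ℤ)

lemma latBF_add_left (x y z : Fin n → ℚ) : latBF G (x + y) z = latBF G x z + latBF G y z := by
  simp [latBF, add_dotProduct]

lemma latBF_add_right (x y z : Fin n → ℚ) : latBF G x (y + z) = latBF G x y + latBF G x z := by
  simp [latBF, Matrix.mulVec_add, dotProduct_add]

lemma latBF_smul_left (q : ℚ) (x y : Fin n → ℚ) : latBF G (q • x) y = q * latBF G x y := by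
  simp [latBF, smul_dotProduct]

lemma latBF_smul_right (q : ℚ) (x y : Fin n → ℚ) : latBF G x (q • y) = q * latBF G x y := by
  simp [latBF, Matrix.mulVec_smul, dotProduct_smul]

lemma latBF_comm (hsym : G.IsSymm) (x y : Fin n → ℚ) : latBF G x y = latBF G y x := by
  have hM : (G.map (Int.cast : ℤ → ℚ)).transpose = G.map (Int.cast : ℤ → ℚ) := by
    rw [← Matrix.transpose_map, hsym.eq]
  rw [latBF, Matrix.dotProduct_mulVec, ← Matrix.mulVec_transpose, hM,
    dotProduct_comm, latBF]

lemma latBF_expand (hsym : G.IsSymm) (x γ : Fin n → ℚ) (q : ℚ) :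
    latBF G (x + q • γ) (x + q • γ)
      = latBF G x x + 2 * q * latBF G γ x + q * (q * latBF G γ γ) := by
  simp only [latBF_add_left, latBF_add_right, latBF_smul_left, latBF_smul_right]
  rw [latBF_comm G hsym x γ]
  ring

lemma latBF_int (m m' : Fin n → ℤ) :
    latBF G (fun i => (m i : ℚ)) (fun i => (m' i : ℚ))
      = ((dotProduct m (G.mulVec m') : ℤ) : ℚ) := by
  simp only [latBF, dotProduct, Matrix.mulVec, Matrix.map_apply]
  push_cast
  ring

lemma int_mem_dual (m : Fin n → ℤ) : (fun i => (m i : ℚ)) ∈ latDual G := by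
  intro m'
  exact ⟨_, latBF_int G m m'⟩

lemma eQ_add (s t : ℚ) : eQ (s + t) = eQ s * eQ t := by
  simp only [eQ, ← Complex.exp_add]
  congr 1
  push_cast
  ring

lemma eQ_int (k : ℤ) : eQ (k : ℚ) = 1 := by
  simp only [eQ]
  rw [show 2 * (Real.pi : ℂ) * Complex.I * ((k : ℚ) : ℂ)
    = (k : ℤ) * (2 * (Real.pi : ℂ) * Complex.I) by push_cast; ring]
  exact Complex.exp_int_mul_two_pi_mul_I k

lemma eQ_ne_one {q : ℚ} (h : ¬∃ k : ℤ, q = (k : ℚ)) : eQ q ≠ 1 := by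
  intro h1
  rw [eQ, Complex.exp_eq_one_iff] at h1
  obtain ⟨k, hk⟩ := h1
  refine h ⟨k, ?_⟩
  have hπ : (2 * (Real.pi : ℂ) * Complex.I) ≠ 0 := by
    simp [Real.pi_ne_zero, Complex.I_ne_zero]
  have h2 : (2 * (Real.pi : ℂ) * Complex.I) * (q : ℂ)
      = (2 * (Real.pi : ℂ) * Complex.I) * (k : ℂ) := by rw [hk]; ring
  have := mul_left_cancel₀ hπ h2
  exact_mod_cast this

lemma core {n : ℕ} (G : Matrix (Fin n) (Fin n) ℤ) (hsym : G.IsSymm) (a c : ℤ)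
    (hc0 : (c : ℚ) ≠ 0) (β γ : Fin n → ℚ) (hγ : γ ∈ latDual G)
    (r r' : Fin n → ℤ) (hrr : ∀ i, (r i : ℚ) = (r' i : ℚ) + (c : ℚ) * γ i) :
    ∃ k : ℤ,
      -(a : ℚ) * latBF G ((fun i => (r i : ℚ)) + β) ((fun i => (r i : ℚ)) + β) / (2 * (c : ℚ))
      = -(a : ℚ) * latBF G ((fun i => (r' i : ℚ)) + β) ((fun i => (r' i : ℚ)) + β) / (2 * (c : ℚ))
        + (-(a : ℚ) * (latBF G γ β + (c : ℚ) * latBF G γ γ / 2) + (k : ℚ)) := by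
  obtain ⟨k₀, hk₀⟩ := hγ r'
  have hx : (fun i => (r i : ℚ)) + β = ((fun i => (r' i : ℚ)) + β) + (c : ℚ) • γ := by
    funext i
    simp only [Pi.add_apply, Pi.smul_apply, smul_eq_mul, hrr i]
    ring
  refine ⟨-a * k₀, ?_⟩
  have e2 : latBF G γ ((fun i => (r' i : ℚ)) + β) = (k₀ : ℚ) + latBF G γ β := by
    rw [latBF_add_right, hk₀]
  rw [hx, latBF_expand G hsym _ γ, e2]
  field_simp
  push_cast
  ring

/-- Let `L` be an even lattice, `a, c` coprime with `c ≥ 1`, and `β ∈ L*`.  The summand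
`e(−a·(r+β, r+β)/(2c))` depends only on `r` modulo `c·L`; and if `β ∉ A^{c*}`, i.e.
there is `γ ∈ L*` with `c·γ ∈ L` and `(γ,β) − c·(γ,γ)/2 ∉ ℤ`, then the lattice Gauss
sum `Σ_{r ∈ L/cL} e(−a·(r+β, r+β)/(2c))` vanishes (over any complete set of
representatives of `L/cL`). -/
theorem stmt15 {n : ℕ} (G : Matrix (Fin n) (Fin n) ℤ) (hsym : G.IsSymm) (hdet : G.det ≠ 0)
    (heven : ∀ m : Fin n → ℤ, ∃ t : ℤ,
      latBF G (fun i => (m i : ℚ)) (fun i => (m i : ℚ)) = 2 * t)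
    (a c : ℤ) (hc : 1 ≤ c) (hcop : IsCoprime a c)
    (β : Fin n → ℚ) (hβ : β ∈ latDual G) :
    (∀ r r' : Fin n → ℤ, (∀ i, c ∣ (r i - r' i)) →
      eQ (-(a : ℚ) * latBF G ((fun i => (r i : ℚ)) + β) ((fun i => (r i : ℚ)) + β) /
          (2 * (c : ℚ))) =
      eQ (-(a : ℚ) * latBF G ((fun i => (r' i : ℚ)) + β) ((fun i => (r' i : ℚ)) + β) /
          (2 * (c : ℚ)))) ∧
    ((∃ γ ∈ latDual G, (c : ℚ) • γ ∈ latL n ∧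
        ¬∃ k : ℤ, latBF G γ β - (c : ℚ) * latBF G γ γ / 2 = (k : ℚ)) →
      ∀ R : Finset (Fin n → ℤ),
        (∀ x : Fin n → ℤ, ∃! r, r ∈ R ∧ ∀ i, c ∣ (x i - r i)) →
        ∑ r ∈ R,
          eQ (-(a : ℚ) * latBF G ((fun i => (r i : ℚ)) + β) ((fun i => (r i : ℚ)) + β) /
            (2 * (c : ℚ))) = 0) := by
  have hcz : c ≠ 0 := by omega
  have hc0 : (c : ℚ) ≠ 0 := Int.cast_ne_zero.mpr hcz
  have part1 : ∀ r r' : Fin n → ℤ, (∀ i, c ∣ (r i - r' i)) →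
      eQ (-(a : ℚ) * latBF G ((fun i => (r i : ℚ)) + β) ((fun i => (r i : ℚ)) + β) /
          (2 * (c : ℚ))) =
      eQ (-(a : ℚ) * latBF G ((fun i => (r' i : ℚ)) + β) ((fun i => (r' i : ℚ)) + β) /
          (2 * (c : ℚ))) := by
    intro r r' hdvd
    choose s hs using hdvd
    have hrr : ∀ i, (r i : ℚ) = (r' i : ℚ) + (c : ℚ) * ((s i : ℚ)) := by
      intro i
      have := hs i
      have h2 : (r i : ℤ) = r' i + c * s i := by linarith [hs i]
      exact_mod_cast h2
    obtain ⟨k, hk⟩ := core G hsym a c hc0 β _ (int_mem_dual G s) r r' hrr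
    obtain ⟨k₁, hk₁⟩ := hβ s
    obtain ⟨t, ht⟩ := heven s
    have hJ : -(a : ℚ) * (latBF G (fun i => (s i : ℚ)) β
        + (c : ℚ) * latBF G (fun i => (s i : ℚ)) (fun i => (s i : ℚ)) / 2) + (k : ℚ)
        = ((-a * (k₁ + c * t) + k : ℤ) : ℚ) := by
      rw [latBF_comm G hsym _ β, hk₁, ht]
      push_cast
      ring
    rw [hk, hJ, eQ_add, eQ_int, mul_one]
  refine ⟨part1, ?_⟩
  rintro ⟨γ, hγ, ⟨m, hm⟩, hq⟩ R hR
  -- notation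
  set α : ℚ := latBF G γ β with hα
  set g : ℚ := latBF G γ γ with hg
  -- integrality facts
  have hA : (c : ℚ) * α = ((hβ m).choose : ℚ) := by
    rw [hα, ← latBF_smul_left, ← hm, latBF_comm G hsym]
    exact (hβ m).choose_spec
  have hU : (c : ℚ) * g = ((hγ m).choose : ℚ) := by
    rw [hg, ← latBF_smul_right, ← hm]
    exact (hγ m).choose_spec
  have hT : (c : ℚ) * ((c : ℚ) * g) = 2 * ((heven m).choose : ℚ) := by
    rw [hg, ← latBF_smul_right, ← latBF_smul_left, ← hm]
    exact (heven m).choose_spec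
  set k₁ : ℤ := (hβ m).choose
  set ku : ℤ := (hγ m).choose
  set t : ℤ := (heven m).choose
  obtain ⟨u, v, huv⟩ := hcop
  have hQ : (u : ℚ) * a + (v : ℚ) * c = 1 := by exact_mod_cast huv
  have hne : ¬∃ k : ℤ, -(a : ℚ) * (α + (c : ℚ) * g / 2) = (k : ℚ) := by
    rintro ⟨k, hk⟩
    apply hq
    refine ⟨-u * k + v * (k₁ + t) - ku, ?_⟩
    push_cast
    linear_combination (-(u : ℚ)) * hk + (v : ℚ) * hA + ((v : ℚ) / 2) * hT - hU
      - (α + (c : ℚ) * g / 2) * hQ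
  -- representative machinery
  have hrep₁ : ∀ x : Fin n → ℤ, (hR x).choose ∈ R := fun x => (hR x).choose_spec.1.1
  have hrep₂ : ∀ (x : Fin n → ℤ) (i : Fin n), c ∣ (x i - (hR x).choose i) :=
    fun x => (hR x).choose_spec.1.2
  have hrepu : ∀ (x z : Fin n → ℤ), z ∈ R → (∀ i, c ∣ (x i - z i)) → z = (hR x).choose :=
    fun x z h1 h2 => (hR x).choose_spec.2 z ⟨h1, h2⟩
  set f : (Fin n → ℤ) → ℂ := fun r =>
    eQ (-(a : ℚ) * latBF G ((fun i => (r i : ℚ)) + β) ((fun i => (r i : ℚ)) + β) /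
      (2 * (c : ℚ))) with hf
  set σ : (Fin n → ℤ) → (Fin n → ℤ) := fun r => (hR (r + m)).choose with hσ
  set τ : (Fin n → ℤ) → (Fin n → ℤ) := fun r => (hR (r - m)).choose with hτ
  have hstep : ∀ r : Fin n → ℤ, f (σ r)
      = eQ (-(a : ℚ) * (α + (c : ℚ) * g / 2)) * f r := by
    intro r
    have h1 : f (σ r) = f (r + m) := by
      rw [hf]
      exact part1 (σ r) (r + m) (fun i => dvd_sub_comm.mp (hrep₂ (r + m) i))
    have hrr : ∀ i, ((r + m) i : ℚ) = (r i : ℚ) + (c : ℚ) * γ i := by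
      intro i
      have := congrFun hm i
      simp only [Pi.smul_apply, smul_eq_mul] at this
      simp only [Pi.add_apply]
      push_cast
      rw [this]
    obtain ⟨k, hk⟩ := core G hsym a c hc0 β γ hγ (r + m) r hrr
    rw [h1, hf]
    simp only
    rw [hk, ← hα, ← hg, eQ_add, eQ_add, eQ_int, mul_one]
    ring
  have hsum : ∑ r ∈ R, (eQ (-(a : ℚ) * (α + (c : ℚ) * g / 2)) * f r) = ∑ r ∈ R, f r := by
    refine Finset.sum_nbij' σ τ (fun r _ => hrep₁ _) (fun r _ => hrep₁ _) ?_ ?_ ?_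
    · intro r hr
      refine (hrepu (σ r - m) r hr fun i => ?_).symm
      obtain ⟨d, hd⟩ := hrep₂ (r + m) i
      refine ⟨-d, ?_⟩
      simp only [Pi.sub_apply, Pi.add_apply] at hd ⊢
      linear_combination -hd
    · intro r hr
      refine (hrepu (τ r + m) r hr fun i => ?_).symm
      obtain ⟨d, hd⟩ := hrep₂ (r - m) i
      refine ⟨-d, ?_⟩
      simp only [Pi.sub_apply, Pi.add_apply] at hd ⊢
      linear_combination -hd
    · intro r _
      exact (hstep r).symm
  have hS : (eQ (-(a : ℚ) * (α + (c : ℚ) * g / 2)) - 1) * ∑ r ∈ R, f r = 0 := by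
    rw [← Finset.mul_sum] at hsum
    linear_combination hsum
  rcases mul_eq_zero.mp hS with h | h
  · exact absurd (by linear_combination h) (eQ_ne_one hne)
  · exact h
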